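/- arXiv:1501.04008 — 7 statements merged into one kernel-verified Lean document; each statement's English description precedes it below -/
import Mathlib

section
/- Let F be a non-empty collection of open discs in the complex plane that is nested (totally ordered by inclusion), such that the supremum of the radii of the discs in F is finite. Then the union of F is an open disc whose radius equals the supremum of the radii of the discs in F. -/
/-!
If `B(x, r) ⊆ B(y, r')` with `r > 0` in a nontrivial real normed space, then
`dist x y + r ≤ r'`. For a chain of balls `B(cᵢ, rᵢ)` whose radii have supremum `s` this gives
`dist cᵢ cⱼ ≤ (s - rᵢ) + (s - rⱼ)`, so the centres of balls with radii tending to `s` form a Cauchy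
sequence. Its limit `z` satisfies `dist cᵢ z ≤ s - rᵢ`, hence every ball of the chain lies in
`B(z, s)`, and conversely `B(z, s)` is exhausted by the balls whose radii are close to `s`.
-/

/-- An open disc in the complex plane: a set of the form `B(z,r)` with `r > 0`. -/
def IsOpenDisc (D : Set ℂ) : Prop := ∃ z : ℂ, ∃ r : ℝ, 0 < r ∧ D = Metric.ball z r

/-- The radius of a disc, computed as half its diameter (so `r = 0` for `∅` or singletons). -/
noncomputable def discRadius (D : Set ℂ) : ℝ := Metric.diam D / 2

open Filter Metric Set Topology

theorem Metric.dist_add_le_of_ball_subset_ball {E : Type*} [NormedAddCommGroup E]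
    [NormedSpace ℝ E] [Nontrivial E] {x y : E} {r r' : ℝ} (hr : 0 < r)
    (h : ball x r ⊆ ball y r') : dist x y + r ≤ r' := by
  obtain ⟨v, hv, hxy⟩ : ∃ v : E, ‖v‖ = 1 ∧ x - y = ‖x - y‖ • v := by
    rcases eq_or_ne (x - y) 0 with hxy | hxy
    · obtain ⟨v, hv⟩ := exists_norm_eq E zero_le_one
      exact ⟨v, hv, by simp [hxy]⟩
    · exact ⟨‖x - y‖⁻¹ • (x - y), norm_smul_inv_norm (𝕜 := ℝ) hxy,
        (smul_inv_smul₀ (norm_ne_zero_iff.2 hxy) _).symm⟩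
  -- `x + r • v` is the point of `closedBall x r` farthest from `y`.
  have hmem : x + r • v ∈ closedBall y r' := by
    refine closure_ball_subset_closedBall (closure_mono h ?_)
    rw [closure_ball x hr.ne']
    simp [norm_smul, hv, abs_of_pos hr]
  calc dist x y + r = ‖(‖x - y‖ + r) • v‖ := by
        rw [norm_smul, hv, mul_one, Real.norm_of_nonneg (by positivity), dist_eq_norm]
    _ = dist (x + r • v) y := by
        rw [dist_eq_norm, add_smul, ← hxy, add_sub_right_comm]
    _ ≤ r' := hmem

section PseudoMetricSpace

variable {X ι : Type*} [PseudoMetricSpace X] {c : ι → X} {r : ι → ℝ} {s : ℝ}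

theorem Metric.exists_forall_dist_le_of_isLUB [CompleteSpace X] [Nonempty ι]
    (hs : IsLUB (range r) s) (hc : ∀ i j, dist (c i) (c j) ≤ (s - r i) + (s - r j)) :
    ∃ z, ∀ i, dist (c i) z ≤ s - r i := by
  obtain ⟨u, hu_mono, -, hu_lim, hu_mem⟩ := hs.exists_seq_monotone_tendsto (range_nonempty r)
  choose k hk using hu_mem
  obtain rfl : r ∘ k = u := funext hk
  have hgap : Tendsto (fun n => s - r (k n)) atTop (𝓝 0) := by
    simpa using (tendsto_const_nhds (x := s)).sub hu_lim
  have hcauchy : CauchySeq (c ∘ k) := by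
    refine cauchySeq_of_le_tendsto_0 (fun N => 2 * (s - r (k N))) (fun n m N hn hm => ?_)
      (by simpa using hgap.const_mul 2)
    have hrn : r (k N) ≤ r (k n) := hu_mono hn
    have hrm : r (k N) ≤ r (k m) := hu_mono hm
    exact (hc (k n) (k m)).trans (by linarith)
  obtain ⟨z, hz⟩ := cauchySeq_tendsto_of_complete hcauchy
  refine ⟨z, fun i => le_of_tendsto_of_tendsto' (tendsto_const_nhds.dist hz)
    (by simpa using tendsto_const_nhds.add hgap) fun n => hc i (k n)⟩

theorem Metric.iUnion_ball_eq_ball_of_isLUB {z : X} (hs : IsLUB (range r) s)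
    (hz : ∀ i, dist (c i) z ≤ s - r i) : ⋃ i, ball (c i) (r i) = ball z s := by
  refine Subset.antisymm (iUnion_subset fun i => ball_subset_ball' ?_) fun w hw => ?_
  · linarith [hz i]
  · rw [mem_ball] at hw
    obtain ⟨_, ⟨i, rfl⟩, hi, -⟩ := hs.exists_between (by linarith : (s + dist w z) / 2 < s)
    refine mem_iUnion.2 ⟨i, mem_ball.2 ?_⟩
    linarith [dist_triangle_right w (c i) z, hz i]

end PseudoMetricSpace

theorem Metric.exists_iUnion_ball_eq_ball_of_isChain {E ι : Type*} [NormedAddCommGroup E]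
    [NormedSpace ℝ E] [Nontrivial E] [CompleteSpace E] [Nonempty ι] {c : ι → E} {r : ι → ℝ}
    {s : ℝ} (hr : ∀ i, 0 < r i)
    (hchain : ∀ i j, ball (c i) (r i) ⊆ ball (c j) (r j) ∨ ball (c j) (r j) ⊆ ball (c i) (r i))
    (hs : IsLUB (range r) s) : ∃ z, ⋃ i, ball (c i) (r i) = ball z s := by
  have hc : ∀ i j, dist (c i) (c j) ≤ (s - r i) + (s - r j) := fun i j => by
    have hri := hs.1 (mem_range_self i)
    have hrj := hs.1 (mem_range_self j)
    rcases hchain i j with hij | hji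
    · linarith [dist_add_le_of_ball_subset_ball (hr i) hij]
    · linarith [dist_add_le_of_ball_subset_ball (hr j) hji, dist_comm (c i) (c j)]
  obtain ⟨z, hz⟩ := exists_forall_dist_le_of_isLUB hs hc
  exact ⟨z, iUnion_ball_eq_ball_of_isLUB hs hz⟩

theorem discRadius_ball (z : ℂ) {r : ℝ} (hr : 0 ≤ r) : discRadius (ball z r) = r := by
  rw [discRadius, diam_ball_eq z hr]
  ring

theorem union_of_nested_open_discs (F : Set (Set ℂ)) (hne : F.Nonempty)
    (hchain : IsChain (· ⊆ ·) F) (hdisc : ∀ D ∈ F, IsOpenDisc D)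
    (hbdd : BddAbove (discRadius '' F)) :
    IsOpenDisc (⋃₀ F) ∧ discRadius (⋃₀ F) = sSup (discRadius '' F) := by
  choose c r hr hball using fun D : F => hdisc D D.2
  have hradius : (fun D : F => discRadius D) = r := funext fun D => by
    rw [hball D, discRadius_ball _ (hr D).le]
  have hs : IsLUB (range r) (sSup (discRadius '' F)) := by
    simpa only [image_eq_range, hradius] using isLUB_csSup (hne.image discRadius) hbdd
  have : Nonempty F := hne.to_subtype
  obtain ⟨z, hz⟩ := exists_iUnion_ball_eq_ball_of_isChain (c := c) hr
    (fun D E => by simpa only [← hball] using hchain.total D.2 E.2) hs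
  have hunion : ⋃₀ F = ball z (sSup (discRadius '' F)) := by
    rw [sUnion_eq_iUnion, ← hz, iUnion_congr hball]
  have hpos := (hr (Classical.arbitrary F)).trans_le (hs.1 (mem_range_self _))
  exact ⟨⟨z, _, hpos, hunion⟩, by rw [hunion, discRadius_ball z hpos.le]⟩
end

section
/- Let F be a non-empty nested collection of closed discs in ℂ. Then the intersection of F is a closed disc or a singleton (in particular, it is non-empty). -/
/-- A closed disc in the complex plane: a set of the form `{w : |w - z| ≤ r}` with `r > 0`. -/
def IsClosedDisc (D : Set ℂ) : Prop := ∃ z : ℂ, ∃ r : ℝ, 0 < r ∧ D = Metric.closedBall z r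

/-!
Let `R` be the infimum of the radii. Since `closedBall x r ⊆ closedBall y s` forces
`r + dist x y ≤ s`, the balls shrunk by `R` are still nested; they are compact and non-empty,
so by Cantor's intersection theorem they share a point `z`. Then `closedBall z R` lies in every
ball of the family, and a point `w` of the intersection satisfies `dist w z ≤ 2 ρ - R` for every
radius `ρ`, hence `dist w z ≤ R`.
-/

open Metric Set

section NormedSpace

variable {E : Type*} [NormedAddCommGroup E] [NormedSpace ℝ E] [Nontrivial E]

theorem exists_sameRay_norm_eq (w : E) {r : ℝ} (hr : 0 ≤ r) : ∃ v, SameRay ℝ w v ∧ ‖v‖ = r := by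
  rcases eq_or_ne w 0 with rfl | hw
  · obtain ⟨v, hv⟩ := exists_norm_eq E hr
    exact ⟨v, SameRay.zero_left v, hv⟩
  · refine ⟨(r / ‖w‖) • w, SameRay.sameRay_nonneg_smul_right w (by positivity), ?_⟩
    rw [norm_smul, Real.norm_of_nonneg (by positivity), div_mul_cancel₀ r (norm_ne_zero_iff.2 hw)]

theorem add_dist_le_of_closedBall_subset_closedBall {x y : E} {r s : ℝ} (hr : 0 ≤ r)
    (h : closedBall x r ⊆ closedBall y s) : r + dist x y ≤ s := by
  obtain ⟨v, hv, hvr⟩ := exists_sameRay_norm_eq (x - y) hr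
  have hmem : x + v ∈ closedBall x r := by simp [hvr]
  calc r + dist x y = dist (x + v) y := by
        rw [dist_eq_norm, dist_eq_norm, add_sub_right_comm, hv.norm_add, hvr, add_comm]
    _ ≤ s := h hmem

theorem closedBall_sub_subset_closedBall_sub {x y : E} {r s : ℝ} (hr : 0 ≤ r)
    (h : closedBall x r ⊆ closedBall y s) (t : ℝ) : closedBall x (r - t) ⊆ closedBall y (s - t) :=
  closedBall_subset_closedBall' (by linarith [add_dist_le_of_closedBall_subset_closedBall hr h])

theorem exists_sInter_eq_closedBall_of_isChain [ProperSpace E] {F : Set (Set E)}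
    (hne : F.Nonempty) (hchain : IsChain (· ⊆ ·) F)
    (hball : ∀ D ∈ F, ∃ z : E, ∃ r : ℝ, 0 ≤ r ∧ D = closedBall z r) :
    ∃ z : E, ∃ r : ℝ, 0 ≤ r ∧ ⋂₀ F = closedBall z r := by
  choose! c ρ hρ hcρ using hball
  have hbdd : BddBelow (ρ '' F) := ⟨0, forall_mem_image.2 hρ⟩
  set R := sInf (ρ '' F)
  have hR : ∀ D ∈ F, R ≤ ρ D := fun D hD ↦ csInf_le hbdd (mem_image_of_mem ρ hD)
  obtain ⟨z, hz⟩ : ∃ z, ∀ D ∈ F, dist z (c D) ≤ ρ D - R := by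
    have hdir : Directed (· ⊇ ·) fun D : F ↦ closedBall (c D) (ρ D - R) := by
      have shrink {A B : F} (h : A.1 ⊆ B.1) :
          closedBall (c A) (ρ A - R) ⊆ closedBall (c B) (ρ B - R) := by
        rw [hcρ A A.2, hcρ B B.2] at h
        exact closedBall_sub_subset_closedBall_sub (hρ A A.2) h R
      intro D D'
      rcases hchain.total D.2 D'.2 with h | h
      · exact ⟨D, le_rfl, shrink h⟩
      · exact ⟨D', shrink h, le_rfl⟩
    have := hne.to_subtype
    obtain ⟨z, hz⟩ := IsCompact.nonempty_iInter_of_directed_nonempty_isCompact_isClosed _ hdir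
      (fun D ↦ nonempty_closedBall.2 (sub_nonneg.2 (hR D D.2)))
      (fun _ ↦ isCompact_closedBall _ _) (fun _ ↦ isClosed_closedBall)
    exact ⟨z, fun D hD ↦ mem_iInter.1 hz ⟨D, hD⟩⟩
  refine ⟨z, R, le_csInf (hne.image ρ) (forall_mem_image.2 hρ), ?_⟩
  apply Subset.antisymm
  · intro w hw
    have hmid : (dist w z + R) / 2 ≤ R := by
      refine le_csInf (hne.image ρ) (forall_mem_image.2 fun D hD ↦ ?_)
      have hwD := hw D hD
      rw [hcρ D hD, mem_closedBall] at hwD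
      linarith [dist_triangle w (c D) z, dist_comm z (c D), hz D hD]
    rw [mem_closedBall]
    linarith
  · refine subset_sInter fun D hD ↦ ?_
    rw [hcρ D hD]
    exact closedBall_subset_closedBall' (by linarith [hz D hD])

end NormedSpace

theorem inter_of_nested_closed_discs (F : Set (Set ℂ)) (hne : F.Nonempty)
    (hchain : IsChain (· ⊆ ·) F) (hdisc : ∀ D ∈ F, IsClosedDisc D) :
    ∃ z : ℂ, ∃ r : ℝ, 0 ≤ r ∧ ⋂₀ F = Metric.closedBall z r :=
  exists_sInter_eq_closedBall_of_isChain hne hchain fun D hD ↦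
    let ⟨z, r, hr, hD⟩ := hdisc D hD
    ⟨z, r, hr.le, hD⟩
end

section
/- Let F be a non-empty nested collection of closed discs in ℂ. Then there is a nested decreasing sequence (D_n) in F whose intersection equals the intersection of F, and the radius of the intersection (a closed disc or singleton) equals the infimum of the radii of the discs in F. -/
/-!
Comparing radii orders the chain, so one can pick discs `D n ∈ F`, decreasing, whose radii decrease
to the infimum `r` of all radii. Their centres form a Cauchy sequence, since
`closedBall a s ⊆ closedBall b t` forces `s + dist a b ≤ t`, and `⋂ n, D n` is the closed ball of
radius `r` about the limit `w`. A disc of `F` that lies in every `D n` lies in `closedBall w r`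
and has radius at least `r`, so it equals that ball; hence `⋂ n, D n = ⋂₀ F`.
-/

open Metric Set Filter Topology

section NormedSpace

variable {E : Type*} [NormedAddCommGroup E] [NormedSpace ℝ E] [Nontrivial E]

theorem exists_norm_eq_one_sameRay (w : E) : ∃ v : E, ‖v‖ = 1 ∧ SameRay ℝ w v := by
  rcases eq_or_ne w 0 with rfl | hw
  · obtain ⟨v, hv⟩ := exists_norm_eq E zero_le_one
    exact ⟨v, hv, SameRay.zero_left v⟩
  · exact ⟨‖w‖⁻¹ • w, norm_smul_inv_norm hw,
      SameRay.sameRay_nonneg_smul_right w (inv_nonneg.2 (norm_nonneg w))⟩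

theorem closedBall_subset_closedBall_iff {a b : E} {s t : ℝ} (hs : 0 ≤ s) :
    closedBall a s ⊆ closedBall b t ↔ s + dist a b ≤ t := by
  refine ⟨fun h => ?_, closedBall_subset_closedBall'⟩
  obtain ⟨v, hv, hray⟩ := exists_norm_eq_one_sameRay (a - b)
  have hmem : a + s • v ∈ closedBall b t :=
    h (by simp [norm_smul, hv, abs_of_nonneg hs])
  calc s + dist a b = ‖(a - b) + s • v‖ := by
        rw [(hray.nonneg_smul_right hs).norm_add, norm_smul, hv, Real.norm_of_nonneg hs,
          dist_eq_norm]
        ring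
    _ = dist (a + s • v) b := by rw [dist_eq_norm]; abel_nf
    _ ≤ t := hmem

theorem closedBall_eq_of_subset_of_le {a b : E} {s t : ℝ} (hs : 0 ≤ s)
    (h : closedBall a s ⊆ closedBall b t) (hts : t ≤ s) : closedBall a s = closedBall b t := by
  have hle := (closedBall_subset_closedBall_iff hs).1 h
  have hab : a = b := dist_le_zero.1 (by linarith)
  have hst : s = t := by linarith [dist_nonneg (x := a) (y := b)]
  rw [hab, hst]

theorem exists_iInter_closedBall_eq_closedBall [CompleteSpace E] {c : ℕ → E} {ρ : ℕ → ℝ}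
    {r : ℝ} (hρ : ∀ n, 0 ≤ ρ n) (hanti : Antitone fun n => closedBall (c n) (ρ n))
    (hlim : Tendsto ρ atTop (𝓝 r)) : ∃ w, ⋂ n, closedBall (c n) (ρ n) = closedBall w r := by
  have hdist : ∀ m n, m ≤ n → ρ n + dist (c n) (c m) ≤ ρ m := fun m n hmn =>
    (closedBall_subset_closedBall_iff (hρ n)).1 (hanti hmn)
  have hρ_anti : Antitone ρ := fun m n hmn => by
    linarith [hdist m n hmn, dist_nonneg (x := c n) (y := c m)]
  have hr : ∀ n, r ≤ ρ n := hρ_anti.le_of_tendsto hlim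
  have hcauchy : CauchySeq c :=
    cauchySeq_of_le_tendsto_0' (fun n => ρ n - r)
      (fun m n hmn => by rw [dist_comm]; linarith [hdist m n hmn, hr n])
      (by simpa using hlim.sub_const r)
  obtain ⟨w, hw⟩ := cauchySeq_tendsto_of_complete hcauchy
  have hwc : ∀ n, r + dist w (c n) ≤ ρ n := fun n => by
    have : dist w (c n) ≤ ρ n - r :=
      le_of_tendsto (hw.dist tendsto_const_nhds)
        (eventually_atTop.2 ⟨n, fun m hm => by linarith [hdist n m hm, hr m]⟩)
    linarith
  refine ⟨w, Subset.antisymm (fun x hx => ?_)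
    (subset_iInter fun n => closedBall_subset_closedBall' (hwc n))⟩
  exact le_of_tendsto_of_tendsto' (tendsto_const_nhds.dist hw) hlim (mem_iInter.1 hx)

end NormedSpace

theorem IsChain.subset_of_le_of_strictMonoOn {α β : Type*} [Preorder β] {F : Set (Set α)}
    (hF : IsChain (· ⊆ ·) F) {f : Set α → β} (hf : StrictMonoOn f F) {A B : Set α}
    (hA : A ∈ F) (hB : B ∈ F) (h : f A ≤ f B) : A ⊆ B := by
  rcases hF.total hA hB with hAB | hBA
  · exact hAB
  · rcases hBA.eq_or_ssubset with rfl | hlt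
    · exact subset_rfl
    · exact absurd h (hf hB hA hlt).not_ge

theorem discRadius_nonneg (D : Set ℂ) : 0 ≤ discRadius D :=
  div_nonneg diam_nonneg zero_le_two

theorem discRadius_closedBall (z : ℂ) {r : ℝ} (hr : 0 ≤ r) : discRadius (closedBall z r) = r := by
  rw [discRadius, diam_closedBall_eq z hr]
  ring

theorem IsClosedDisc.exists_eq_closedBall {D : Set ℂ} (hD : IsClosedDisc D) :
    ∃ z, D = closedBall z (discRadius D) := by
  obtain ⟨z, r, hr, rfl⟩ := hD
  exact ⟨z, by rw [discRadius_closedBall z hr.le]⟩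

theorem IsClosedDisc.eq_of_subset_closedBall {D : Set ℂ} (hD : IsClosedDisc D) {w : ℂ} {r : ℝ}
    (h : D ⊆ closedBall w r) (hr : r ≤ discRadius D) : D = closedBall w r := by
  obtain ⟨z, hz⟩ := hD.exists_eq_closedBall
  rw [hz] at h ⊢
  exact closedBall_eq_of_subset_of_le (discRadius_nonneg D) h hr

theorem strictMonoOn_discRadius : StrictMonoOn discRadius {D | IsClosedDisc D} := by
  intro A (hA : IsClosedDisc A) B (hB : IsClosedDisc B) hAB
  obtain ⟨b, hb⟩ := hB.exists_eq_closedBall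
  refine lt_of_not_ge fun hle => hAB.ne ?_
  rw [hb] at hAB ⊢
  exact hA.eq_of_subset_closedBall hAB.subset hle

theorem exists_decreasing_sequence_of_nested_closed_discs (F : Set (Set ℂ)) (hne : F.Nonempty)
    (hchain : IsChain (· ⊆ ·) F) (hdisc : ∀ D ∈ F, IsClosedDisc D) :
    ∃ D : ℕ → Set ℂ, (∀ n, D n ∈ F) ∧ (∀ n, D (n + 1) ⊆ D n) ∧
      (⋂ n, D n) = ⋂₀ F ∧
      discRadius (⋂₀ F) = sInf (discRadius '' F) := by
  choose! c hc using fun D hD => (hdisc D hD).exists_eq_closedBall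
  have hbdd : BddBelow (discRadius '' F) := ⟨0, forall_mem_image.2 fun D _ => discRadius_nonneg D⟩
  obtain ⟨u, hu_anti, hu_lim, hu_mem⟩ := exists_seq_tendsto_sInf (hne.image discRadius) hbdd
  choose D hDF hDu using hu_mem
  have hD_anti : Antitone D := fun m n hmn =>
    hchain.subset_of_le_of_strictMonoOn (strictMonoOn_discRadius.mono hdisc) (hDF n) (hDF m)
      (by rw [hDu, hDu]; exact hu_anti hmn)
  have hD_eq : (fun n => closedBall (c (D n)) (u n)) = D :=
    funext fun n => (hDu n ▸ hc _ (hDF n)).symm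
  obtain ⟨w, hw⟩ := exists_iInter_closedBall_eq_closedBall (c := fun n => c (D n))
    (fun n => hDu n ▸ discRadius_nonneg _) (by rwa [hD_eq]) hu_lim
  rw [hD_eq] at hw
  have hInter : ⋂ n, D n = ⋂₀ F := by
    refine Subset.antisymm (fun x hx => mem_sInter.2 fun A hA => ?_)
      (subset_iInter fun n => sInter_subset_of_mem (hDF n))
    by_cases hsub : ∃ n, D n ⊆ A
    · obtain ⟨n, hn⟩ := hsub
      exact hn (mem_iInter.1 hx n)
    · rw [not_exists] at hsub
      have hAD : A ⊆ ⋂ n, D n := subset_iInter fun n =>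
        (hchain.total hA (hDF n)).resolve_right (hsub n)
      rw [hw] at hAD hx
      rwa [(hdisc A hA).eq_of_subset_closedBall hAD
        (csInf_le hbdd (mem_image_of_mem _ hA))]
  refine ⟨D, hDF, fun n => hD_anti n.le_succ, hInter, ?_⟩
  rw [← hInter, hw,
    discRadius_closedBall w (Real.sInf_nonneg (forall_mem_image.2 fun D _ => discRadius_nonneg D))]
end

section
/- Composition of allocation maps is an allocation map: if D1, D2, D3 are Swiss cheeses and f : D̃1 → D̃2 and g : D̃2 → D̃3 are allocation maps, then g ∘ f : D̃1 → D̃3 is an allocation map. -/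
/-- A Swiss cheese: a closed disc `Δ` together with a countable collection `𝒟` of open discs. -/
structure SwissCheese where
  Δ : Set ℂ
  𝒟 : Set (Set ℂ)
  hΔ : IsClosedDisc Δ
  h𝒟 : ∀ D ∈ 𝒟, IsOpenDisc D
  hcount : 𝒟.Countable

/-- `D̃ = 𝒟 ∪ {ℂ ∖ Δ}`. -/
def SwissCheese.tilde (D : SwissCheese) : Set (Set ℂ) := D.𝒟 ∪ {D.Δᶜ}

/-- The associated Swiss cheese set `X_D = Δ ∖ ⋃ 𝒟`. -/
def SwissCheese.X (D : SwissCheese) : Set ℂ := D.Δ \ ⋃₀ D.𝒟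

/-- The (possibly infinite) sum of the radii of a collection of discs. -/
noncomputable def radSum (S : Set (Set ℂ)) : ENNReal :=
  ∑' D : S, ENNReal.ofReal (discRadius D)

/-- `δ(D) = r(Δ) − Σ_{D'∈𝒟} r(D')`, possibly `−∞`. -/
noncomputable def SwissCheese.delta (D : SwissCheese) : EReal :=
  (discRadius D.Δ : EReal) - ((radSum D.𝒟 : ENNReal) : EReal)

/-- An allocation map between Swiss cheeses. -/
structure IsAllocationMap (D E : SwissCheese) (f : Set ℂ → Set ℂ) : Prop where
  maps_to : ∀ U ∈ D.tilde, f U ∈ E.tilde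
  a1 : ∀ U ∈ D.tilde, U ⊆ f U
  a2 : ENNReal.ofReal (discRadius D.Δ - discRadius E.Δ) ≤
      radSum {U | U ∈ D.𝒟 ∧ f U = E.Δᶜ}
  a3 : ∀ E' ∈ E.𝒟, ENNReal.ofReal (discRadius E') ≤ radSum {U | U ∈ D.𝒟 ∧ f U = E'}

open Bornology

lemma not_compl_subset_of_isBounded {E : Type*} [NormedAddCommGroup E] [NormedSpace ℝ E]
    [Nontrivial E] {s t : Set E} (hs : IsBounded s) (ht : IsBounded t) : ¬ sᶜ ⊆ t := fun h =>
  NormedSpace.unbounded_univ ℝ E <|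
    (hs.union ht).subset fun x _ => (em (x ∈ s)).imp id (h ·)

lemma IsOpenDisc.isBounded {V : Set ℂ} (hV : IsOpenDisc V) : IsBounded V := by
  obtain ⟨z, r, -, rfl⟩ := hV
  exact Metric.isBounded_ball

lemma IsClosedDisc.isBounded {Δ : Set ℂ} (hΔ : IsClosedDisc Δ) : IsBounded Δ := by
  obtain ⟨z, r, -, rfl⟩ := hΔ
  exact Metric.isBounded_closedBall

namespace SwissCheese

lemma not_compl_subset_of_isOpenDisc (D : SwissCheese) {V : Set ℂ} (hV : IsOpenDisc V) :
    ¬ D.Δᶜ ⊆ V :=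
  not_compl_subset_of_isBounded D.hΔ.isBounded hV.isBounded

lemma compl_notMem_𝒟 (D : SwissCheese) : D.Δᶜ ∉ D.𝒟 := fun h =>
  D.not_compl_subset_of_isOpenDisc (D.h𝒟 _ h) subset_rfl

lemma compl_mem_tilde (D : SwissCheese) : D.Δᶜ ∈ D.tilde := Or.inr rfl

end SwissCheese

lemma radSum_mono {S T : Set (Set ℂ)} (h : S ⊆ T) : radSum S ≤ radSum T :=
  ENNReal.tsum_mono_subtype (fun D => ENNReal.ofReal (discRadius D)) h

lemma radSum_union {S T : Set (Set ℂ)} (h : Disjoint S T) :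
    radSum (S ∪ T) = radSum S + radSum T :=
  ENNReal.summable.tsum_union_disjoint (f := fun D => ENNReal.ofReal (discRadius D)) h
    ENNReal.summable

lemma radSum_setOf_mem_eq_tsum_radSum (𝒟 : Set (Set ℂ)) (f : Set ℂ → Set ℂ) (T : Set (Set ℂ)) :
    radSum {U | U ∈ 𝒟 ∧ f U ∈ T} = ∑' E : T, radSum {U | U ∈ 𝒟 ∧ f U = E} := by
  have hfibres : {U | U ∈ 𝒟 ∧ f U ∈ T} = ⋃ E ∈ T, {U | U ∈ 𝒟 ∧ f U = E} := by
    ext U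
    simp
  have hdisj : T.PairwiseDisjoint fun E => {U | U ∈ 𝒟 ∧ f U = E} :=
    fun E _ E' _ hne => Set.disjoint_left.2 fun U hU hU' => hne (hU.2.symm.trans hU'.2)
  rw [radSum, hfibres, ENNReal.tsum_biUnion' (f := fun D => ENNReal.ofReal (discRadius D)) hdisj]
  rfl

namespace IsAllocationMap

variable {D E F : SwissCheese} {f g : Set ℂ → Set ℂ}

lemma apply_compl (hf : IsAllocationMap D E f) : f D.Δᶜ = E.Δᶜ := by
  rcases hf.maps_to _ D.compl_mem_tilde with h | h
  · exact absurd (hf.a1 _ D.compl_mem_tilde) (D.not_compl_subset_of_isOpenDisc (E.h𝒟 _ h))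
  · exact h

lemma radSum_le_radSum_preimage (hf : IsAllocationMap D E f) {T : Set (Set ℂ)} (hT : T ⊆ E.𝒟) :
    radSum T ≤ radSum {U | U ∈ D.𝒟 ∧ f U ∈ T} := by
  rw [radSum_setOf_mem_eq_tsum_radSum]
  exact ENNReal.tsum_le_tsum fun E' => hf.a3 E' (hT E'.2)

lemma comp_a2 (hf : IsAllocationMap D E f) (hg : IsAllocationMap E F g) :
    ENNReal.ofReal (discRadius D.Δ - discRadius F.Δ) ≤
      radSum {U | U ∈ D.𝒟 ∧ (g ∘ f) U = F.Δᶜ} := by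
  set A := {U | U ∈ D.𝒟 ∧ f U = E.Δᶜ}
  set B := {U | U ∈ D.𝒟 ∧ f U ∈ {E' | E' ∈ E.𝒟 ∧ g E' = F.Δᶜ}}
  have hAB : Disjoint A B := Set.disjoint_left.2 fun U hA hB => E.compl_notMem_𝒟 (hA.2 ▸ hB.2.1)
  have hsub : A ∪ B ⊆ {U | U ∈ D.𝒟 ∧ (g ∘ f) U = F.Δᶜ} := by
    rintro U (⟨hU, hfU⟩ | ⟨hU, -, hgfU⟩)
    · exact ⟨hU, by rw [Function.comp_apply, hfU, hg.apply_compl]⟩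
    · exact ⟨hU, hgfU⟩
  calc ENNReal.ofReal (discRadius D.Δ - discRadius F.Δ)
      ≤ ENNReal.ofReal (discRadius D.Δ - discRadius E.Δ) +
          ENNReal.ofReal (discRadius E.Δ - discRadius F.Δ) := by
        rw [← sub_add_sub_cancel _ (discRadius E.Δ)]
        exact ENNReal.ofReal_add_le
    _ ≤ radSum A + radSum B :=
        add_le_add hf.a2 (hg.a2.trans (hf.radSum_le_radSum_preimage fun _ h => h.1))
    _ = radSum (A ∪ B) := (radSum_union hAB).symm
    _ ≤ _ := radSum_mono hsub

lemma comp_a3 (hf : IsAllocationMap D E f) (hg : IsAllocationMap E F g) {F' : Set ℂ}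
    (hF' : F' ∈ F.𝒟) : ENNReal.ofReal (discRadius F') ≤ radSum {U | U ∈ D.𝒟 ∧ (g ∘ f) U = F'} :=
  calc ENNReal.ofReal (discRadius F')
      ≤ radSum {E' | E' ∈ E.𝒟 ∧ g E' = F'} := hg.a3 F' hF'
    _ ≤ radSum {U | U ∈ D.𝒟 ∧ f U ∈ {E' | E' ∈ E.𝒟 ∧ g E' = F'}} :=
        hf.radSum_le_radSum_preimage fun _ h => h.1
    _ ≤ radSum {U | U ∈ D.𝒟 ∧ (g ∘ f) U = F'} := radSum_mono fun _ hU => ⟨hU.1, hU.2.2⟩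

end IsAllocationMap

theorem comp_allocationMap (D1 D2 D3 : SwissCheese) (f g : Set ℂ → Set ℂ)
    (hf : IsAllocationMap D1 D2 f) (hg : IsAllocationMap D2 D3 g) :
    IsAllocationMap D1 D3 (g ∘ f) :=
  { maps_to := fun U hU => hg.maps_to _ (hf.maps_to U hU)
    a1 := fun U hU => (hf.a1 U hU).trans (hg.a1 _ (hf.maps_to U hU))
    a2 := hf.comp_a2 hg
    a3 := fun _ => hf.comp_a3 hg }
end

section
/- If the Swiss cheese E is above the Swiss cheese D, then δ(E) ≥ δ(D), where δ(Δ, 𝒟) = r(Δ) − Σ_{D∈𝒟} r(D). -/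
/-! The fibres of the allocation map over the holes of `E` and over `ℂ ∖ Δ(E)` are disjoint
subfamilies of `𝒟(D)`, so (A2) and (A3) give `(r(Δ_D) − r(Δ_E))⁺ + Σ_{E.𝒟} r ≤ Σ_{D.𝒟} r`
in `ℝ≥0∞`; rearranging in `EReal` is `δ(D) ≤ δ(E)`. -/

open scoped ENNReal

theorem ENNReal.tsum_tsum_fiber_le {α β : Type*} (g : α → ℝ≥0∞) (s : Set α) (f : α → β)
    (T : Set β) : ∑' t : T, ∑' x : {x | x ∈ s ∧ f x = t}, g x ≤ ∑' x : s, g x := by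
  have hdisj : T.PairwiseDisjoint fun t => {x | x ∈ s ∧ f x = t} :=
    fun t _ t' _ hne => Set.disjoint_left.2 fun x hx hx' => hne (hx.2.symm.trans hx'.2)
  rw [← ENNReal.tsum_biUnion' hdisj]
  exact ENNReal.tsum_mono_subtype g (Set.iUnion₂_subset fun _ _ _ hx => hx.1)

theorem EReal.coe_sub_le_coe_sub_of_ofReal_sub_add_le {a c : ℝ} {b d : ℝ≥0∞}
    (h : ENNReal.ofReal (a - c) + d ≤ b) : (a : EReal) - b ≤ c - d := by
  rcases eq_or_ne b ⊤ with rfl | hb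
  · simp
  have hd : d ≠ ⊤ := ne_top_of_le_ne_top hb (le_add_self.trans h)
  lift b to NNReal using hb
  lift d to NNReal using hd
  simp only [EReal.coe_nnreal_eq_coe_real, ← EReal.coe_sub, EReal.coe_le_coe_iff]
  have hreal := (ENNReal.toReal_le_toReal (by simp) (by simp)).2 h
  rw [ENNReal.toReal_add (by simp) (by simp), ENNReal.toReal_ofReal', ENNReal.coe_toReal,
    ENNReal.coe_toReal] at hreal
  linarith [le_max_left (a - c) 0]

lemma SwissCheese.compl_Δ_notMem_𝒟 (E : SwissCheese) : E.Δᶜ ∉ E.𝒟 := by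
  intro hmem
  obtain ⟨z, r, -, hball⟩ := E.h𝒟 _ hmem
  obtain ⟨z', r', -, hΔ⟩ := E.hΔ
  apply NormedSpace.unbounded_univ ℂ ℂ
  rw [← Set.union_compl_self E.Δ, hball, hΔ]
  exact Metric.isBounded_closedBall.union Metric.isBounded_ball

theorem IsAllocationMap.ofReal_sub_add_radSum_le {D E : SwissCheese} {f : Set ℂ → Set ℂ}
    (hf : IsAllocationMap D E f) :
    ENNReal.ofReal (discRadius D.Δ - discRadius E.Δ) + radSum E.𝒟 ≤ radSum D.𝒟 := by
  have hdisj : Disjoint E.𝒟 {E.Δᶜ} := Set.disjoint_singleton_right.2 E.compl_Δ_notMem_𝒟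
  calc ENNReal.ofReal (discRadius D.Δ - discRadius E.Δ) + radSum E.𝒟
      ≤ radSum {U | U ∈ D.𝒟 ∧ f U = E.Δᶜ} + ∑' E' : E.𝒟, radSum {U | U ∈ D.𝒟 ∧ f U = E'} :=
        add_le_add hf.a2 (ENNReal.tsum_le_tsum fun E' => hf.a3 E' E'.2)
    _ = ∑' t : E.tilde, radSum {U | U ∈ D.𝒟 ∧ f U = t} := by
        rw [SwissCheese.tilde, ENNReal.summable.tsum_union_disjoint
          (f := fun t => radSum {U | U ∈ D.𝒟 ∧ f U = t}) hdisj ENNReal.summable,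
          tsum_singleton E.Δᶜ fun t => radSum {U | U ∈ D.𝒟 ∧ f U = t}, add_comm]
    _ ≤ radSum D.𝒟 :=
        ENNReal.tsum_tsum_fiber_le (fun U => ENNReal.ofReal (discRadius U)) D.𝒟 f E.tilde

theorem above_delta_ge (D E : SwissCheese) (f : Set ℂ → Set ℂ)
    (hf : IsAllocationMap D E f) : D.delta ≤ E.delta :=
  EReal.coe_sub_le_coe_sub_of_ofReal_sub_add_le hf.ofReal_sub_add_radSum_le
end

section
/- Let H be a closed disc and E an open disc in ℂ such that the closure of E is not contained in the interior of H, and the interior of H is not contained in the closure of E. Then there exists a closed disc H' ⊆ H with E ∩ H' = ∅ and r(H') ≥ r(H) − r(E). -/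
/-!
Let `d` be the distance between the centres. The two non-inclusions say `R - s ≤ d` and
`s < d + R`; in particular the centres differ. Take `r' = min R ((d + R - s) / 2)` and push the
centre of `H` away from `w` by `R - r'`, along the line through the two centres: the new disc is
internally tangent to `H`, and its centre lies at distance `d + R - r' ≥ s + r'` from `w`.
-/

open Metric AffineMap

section PseudoMetric

variable {X : Type*} [PseudoMetricSpace X] {x y : X} {r s : ℝ}

lemma le_add_dist_of_not_closedBall_subset_ball (h : ¬ closedBall y s ⊆ ball x r) :
    r ≤ s + dist x y :=
  dist_comm x y ▸ not_lt.mp fun hlt => h (closedBall_subset_ball' hlt)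

lemma lt_add_dist_of_not_ball_subset_closedBall (h : ¬ ball x r ⊆ closedBall y s) :
    s < r + dist x y :=
  not_le.mp fun hle => h ((ball_subset_ball' hle).trans ball_subset_closedBall)

end PseudoMetric

section NormedSpace

variable {E : Type*} [NormedAddCommGroup E] [NormedSpace ℝ E]

lemma exists_dist_eq_and_dist_eq_dist_add {x y : E} (hxy : x ≠ y) {t : ℝ} (ht : 0 ≤ t) :
    ∃ p : E, dist p x = t ∧ dist p y = dist x y + t := by
  have hd : 0 < dist x y := dist_pos.mpr hxy
  refine ⟨lineMap x y (-(t / dist x y)), ?_, ?_⟩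
  · rw [dist_lineMap_left, norm_neg, Real.norm_of_nonneg (by positivity), div_mul_cancel₀ _ hd.ne']
  · rw [dist_lineMap_right, sub_neg_eq_add, Real.norm_of_nonneg (by positivity), add_mul,
      div_mul_cancel₀ _ hd.ne', one_mul]

lemma exists_closedBall_subset_closedBall_disjoint_ball {x w : E} {R s : ℝ} (hR : 0 < R)
    (hs : 0 < s) (hle : R ≤ s + dist x w) (hlt : s < R + dist x w) :
    ∃ z : E, ∃ r : ℝ, 0 < r ∧ R - s ≤ r ∧ closedBall z r ⊆ closedBall x R ∧
      Disjoint (ball w s) (closedBall z r) := by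
  have hxw : x ≠ w := by
    rintro rfl
    rw [dist_self] at hle hlt
    linarith
  set r := min R ((dist x w + R - s) / 2)
  have hrR : r ≤ R := min_le_left _ _
  have hr2 : r ≤ (dist x w + R - s) / 2 := min_le_right _ _
  obtain ⟨z, hzx, hzw⟩ := exists_dist_eq_and_dist_eq_dist_add hxw (sub_nonneg.mpr hrR)
  refine ⟨z, r, lt_min hR (by linarith), le_min (by linarith) (by linarith), ?_, ?_⟩
  · exact closedBall_subset_closedBall' (by linarith)
  · exact (closedBall_disjoint_ball (by rw [hzw]; linarith)).symm

end NormedSpace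

theorem exists_subdisc_avoiding_disc (zH w : ℂ) (R s : ℝ) (hR : 0 < R) (hs : 0 < s)
    (h1 : ¬ closure (Metric.ball w s) ⊆ interior (Metric.closedBall zH R))
    (h2 : ¬ interior (Metric.closedBall zH R) ⊆ closure (Metric.ball w s)) :
    ∃ z' : ℂ, ∃ r' : ℝ, 0 < r' ∧ R - s ≤ r' ∧
      Metric.closedBall z' r' ⊆ Metric.closedBall zH R ∧
      Metric.ball w s ∩ Metric.closedBall z' r' = ∅ := by
  rw [closure_ball w hs.ne', interior_closedBall zH hR.ne'] at h1 h2
  have hle := le_add_dist_of_not_closedBall_subset_ball h1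
  have hlt := lt_add_dist_of_not_ball_subset_closedBall h2
  obtain ⟨z, r, hr, hRs, hsub, hdisj⟩ :=
    exists_closedBall_subset_closedBall_disjoint_ball hR hs hle hlt
  exact ⟨z, r, hr, hRs, hsub, hdisj.inter_eq⟩
end

section
/- Let X be a semiclassical Swiss cheese set with associated semiclassical Swiss cheese (Δ, 𝒟), and let μ be the measure μ_{γ_Δ} + Σ_{D'∈𝒟} μ_{γ_{D'}} formed from the positively oriented boundary circle of Δ and negatively oriented boundary circles of the removed discs. Then ∫ f dμ = 0 for every rational function f with no poles on X. -/
/-!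
By partial fractions, `p / q` is a polynomial plus one term `b r (z) / (z - r) ^ m` for each
root `r` of `q`. Expanding `b r` in powers of `z - r`, the integral of such a term over a circle
is a fixed number `res r` if `r` lies inside the circle and `0` if it lies outside, so every
circle integral of `p / q` is the sum of `res r` over the enclosed roots. Since `q` has no zeros
on `X`, each root inside the outer circle lies in exactly one removed disc, and only finitely
many removed discs contain roots at all.
-/

open Metric Polynomial Complex Real

theorem exists_eval_div_prod_eq_add_sum {K : Type*} [Field K] [DecidableEq K] (s : Finset K)
    (m : K → ℕ) (p : K[X]) :
    ∃ (a : K[X]) (b : K → K[X]), ∀ z ∉ s,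
      p.eval z / ∏ r ∈ s, (z - r) ^ m r = a.eval z + ∑ r ∈ s, (b r).eval z / (z - r) ^ m r := by
  induction s using Finset.induction_on generalizing p with
  | empty => exact ⟨p, 0, fun z _ => by simp⟩
  | insert r₀ s hr₀ ih =>
    obtain ⟨u, v, huv⟩ : IsCoprime ((X - C r₀) ^ m r₀) (∏ r ∈ s, (X - C r) ^ m r) :=
      IsCoprime.prod_right fun r hr => (isCoprime_X_sub_C_of_isUnit_sub
        (sub_ne_zero.2 (ne_of_mem_of_not_mem hr hr₀).symm).isUnit).pow
    obtain ⟨a, b, hab⟩ := ih (p * u)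
    refine ⟨a, Function.update b r₀ (p * v), fun z hz => ?_⟩
    rw [Finset.mem_insert, not_or] at hz
    have hA : (z - r₀) ^ m r₀ ≠ 0 := pow_ne_zero _ (sub_ne_zero.2 hz.1)
    have hB : ∏ r ∈ s, (z - r) ^ m r ≠ 0 := Finset.prod_ne_zero_iff.2 fun r hr =>
      pow_ne_zero _ (sub_ne_zero.2 (ne_of_mem_of_not_mem hr hz.2).symm)
    have huv' : u.eval z * (z - r₀) ^ m r₀ + v.eval z * ∏ r ∈ s, (z - r) ^ m r = 1 := by
      simpa [eval_prod] using congrArg (eval z) huv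
    have hb : ∀ r ∈ s, (Function.update b r₀ (p * v) r).eval z / (z - r) ^ m r =
        (b r).eval z / (z - r) ^ m r := fun r hr => by
      rw [Function.update_of_ne (ne_of_mem_of_not_mem hr hr₀)]
    rw [Finset.prod_insert hr₀, Finset.sum_insert hr₀, Function.update_self,
      Finset.sum_congr rfl hb, add_left_comm, ← hab z hz.2, eval_mul, eval_mul,
      div_add_div _ _ hA hB, eq_div_iff (mul_ne_zero hA hB), div_mul_cancel₀ _ (mul_ne_zero hA hB)]
    linear_combination (-eval z p) * huv'

theorem circleIntegral_sub_zpow_of_mem_ball {w r : ℂ} {s : ℝ} (hr : r ∈ ball w s) (n : ℤ) :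
    (∮ z in C(w, s), (z - r) ^ n) = if n = -1 then 2 * π * I else 0 := by
  split_ifs with hn
  · simpa [hn] using circleIntegral.integral_sub_inv_of_mem_ball hr
  · exact circleIntegral.integral_sub_zpow_of_ne hn _ _ _

theorem eval_div_sub_pow_eq_sum {K : Type*} [Field K] (b : K[X]) {r z : K} (hz : z ≠ r) (m : ℕ)
    {n : ℕ} (hn : (taylor r b).natDegree < n) :
    b.eval z / (z - r) ^ m =
      ∑ k ∈ Finset.range n, (taylor r b).coeff k * (z - r) ^ ((k : ℤ) - m) := by
  have hzr : z - r ≠ 0 := sub_ne_zero.2 hz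
  rw [← taylor_eval_sub r b z, eval_eq_sum_range' hn, Finset.sum_div]
  refine Finset.sum_congr rfl fun k _ => ?_
  rw [mul_div_assoc, zpow_sub₀ hzr, zpow_natCast, zpow_natCast]

open scoped Classical in
theorem circleIntegral_eval_div_sub_pow (b : ℂ[X]) {w r : ℂ} {s : ℝ} (hs : 0 ≤ s)
    (hr : r ∉ sphere w s) {m : ℕ} (hm : m ≠ 0) :
    (∮ z in C(w, s), b.eval z / (z - r) ^ m) =
      if r ∈ ball w s then 2 * π * I * (taylor r b).coeff (m - 1) else 0 := by
  split_ifs with hin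
  · set n := (taylor r b).natDegree + m
    have hexpand : Set.EqOn (fun z => b.eval z / (z - r) ^ m)
        (fun z => ∑ k ∈ Finset.range n, (taylor r b).coeff k * (z - r) ^ ((k : ℤ) - m))
        (sphere w s) :=
      fun z hz => eval_div_sub_pow_eq_sum b (ne_of_mem_of_not_mem hz hr) m (by omega)
    rw [circleIntegral.integral_congr hs hexpand, circleIntegral.integral_fun_sum fun k _ => ?_]
    · simp_rw [circleIntegral.integral_const_mul, circleIntegral_sub_zpow_of_mem_ball hin]
      rw [Finset.sum_eq_single (m - 1) (fun k _ hk => by rw [if_neg (by omega), mul_zero])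
        (fun h => absurd (Finset.mem_range.2 (by omega)) h), if_pos (by omega)]
      ring
    · exact (circleIntegrable_sub_zpow_iff.2
        (Or.inr (Or.inr (by rwa [abs_of_nonneg hs])))).const_mul _
  · have hout : r ∉ closedBall w s := fun h =>
      (mem_closedBall.1 h).lt_or_eq.elim (fun h => hin h) (fun h => hr h)
    refine DiffContOnCl.circleIntegral_eq_zero hs (DifferentiableOn.diffContOnCl fun z hz => ?_)
    have hzr : z - r ≠ 0 :=
      sub_ne_zero.2 (ne_of_mem_of_not_mem (closure_ball_subset_closedBall hz) hout)
    exact (b.differentiableAt.div ((differentiableAt_id.sub_const r).pow m)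
      (pow_ne_zero m hzr)).differentiableWithinAt

theorem eval_eq_leadingCoeff_mul_prod_roots {K : Type*} [Field K] [IsAlgClosed K] [DecidableEq K]
    (q : K[X]) (z : K) :
    q.eval z = q.leadingCoeff * ∏ r ∈ q.roots.toFinset, (z - r) ^ q.rootMultiplicity r := by
  conv_lhs => rw [← C_leadingCoeff_mul_prod_multiset_X_sub_C (p := q)
    IsAlgClosed.card_roots_eq_natDegree, prod_multiset_root_eq_finset_root]
  simp [eval_prod]

open scoped Classical in
theorem exists_circleIntegral_eval_div_eq_sum (p q : ℂ[X]) :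
    ∃ res : ℂ → ℂ, ∀ (w : ℂ) (s : ℝ), 0 ≤ s → (∀ z ∈ sphere w s, q.eval z ≠ 0) →
      (∮ z in C(w, s), p.eval z / q.eval z) = ∑ r ∈ q.roots.toFinset with r ∈ ball w s, res r := by
  set S := q.roots.toFinset
  set m : ℂ → ℕ := fun r => q.rootMultiplicity r
  obtain ⟨a, b, hab⟩ := exists_eval_div_prod_eq_add_sum S m (C q.leadingCoeff⁻¹ * p)
  refine ⟨fun r => 2 * π * I * (taylor r (b r)).coeff (m r - 1), fun w s hs hsph => ?_⟩
  have hS : ∀ r ∈ S, q.eval r = 0 := fun r hr => (mem_roots'.1 (Multiset.mem_toFinset.1 hr)).2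
  have hm : ∀ r ∈ S, m r ≠ 0 := fun r hr =>
    (rootMultiplicity_pos'.2 (mem_roots'.1 (Multiset.mem_toFinset.1 hr))).ne'
  have hsphS : ∀ r ∈ S, r ∉ sphere w s := fun r hr hrs => hsph r hrs (hS r hr)
  have hfrac : Set.EqOn (fun z => p.eval z / q.eval z)
      (fun z => a.eval z + ∑ r ∈ S, (b r).eval z / (z - r) ^ m r) (sphere w s) := fun z hz => by
    dsimp only
    rw [← hab z fun hzS => hsph z hz (hS z hzS), eval_eq_leadingCoeff_mul_prod_roots q, eval_mul,
      eval_C]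
    ring
  have hint : ∀ r ∈ S, CircleIntegrable (fun z => (b r).eval z / (z - r) ^ m r) w s := fun r hr =>
    ContinuousOn.circleIntegrable hs <| (b r).continuous.continuousOn.div (by fun_prop)
      fun z hz => pow_ne_zero _ (sub_ne_zero.2 (ne_of_mem_of_not_mem hz (hsphS r hr)))
  rw [circleIntegral.integral_congr hs hfrac,
    circleIntegral.integral_add (a.continuous.continuousOn.circleIntegrable hs)
      (CircleIntegrable.fun_sum S hint), circleIntegral.integral_fun_sum hint,
    (a.differentiable.differentiableOn.diffContOnCl (s := ball w s)).circleIntegral_eq_zero hs,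
    zero_add, Finset.sum_filter]
  exact Finset.sum_congr rfl fun r hr =>
    circleIntegral_eval_div_sub_pow (b r) hs (hsphS r hr) (hm r hr)

open Function in
theorem hasSum_sum_filter_mem_of_pairwise_disjoint {ι α M : Type*} [AddCommMonoid M]
    [TopologicalSpace M] [ContinuousAdd M] {B : ι → Set α} [∀ i, DecidablePred (· ∈ B i)]
    (hB : Pairwise (Disjoint on B)) (S : Finset α) (hS : ∀ x ∈ S, ∃ i, x ∈ B i) (f : α → M) :
    HasSum (fun i => ∑ x ∈ S with x ∈ B i, f x) (∑ x ∈ S, f x) := by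
  classical
  simp_rw [Finset.sum_filter]
  refine hasSum_sum fun x hx => ?_
  obtain ⟨j, hj⟩ := hS x hx
  have hmem : ∀ i, x ∈ B i ↔ i = j := fun i =>
    ⟨fun hi => hB.eq (Set.not_disjoint_iff.2 ⟨x, hi, hj⟩), fun h => h ▸ hj⟩
  simp_rw [hmem]
  exact hasSum_ite_eq j (f x)

theorem Disjoint.sphere_left_of_ball {E : Type*} [NormedAddCommGroup E] [NormedSpace ℝ E]
    {x : E} {r : ℝ} {t : Set E} (hr : r ≠ 0) (h : Disjoint (ball x r) t) (ht : IsOpen t) :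
    Disjoint (sphere x r) t :=
  (h.closure_left ht).mono_left (closure_ball x hr ▸ sphere_subset_closedBall)

theorem semiclassical_measure_annihilates_rational_general {ι : Type}
    (z0 : ℂ) (R : ℝ) (c : ι → ℂ) (ρ : ι → ℝ) (hR : 0 < R) (hρ : ∀ i, 0 < ρ i)
    (hdisj : ∀ i j, i ≠ j → Disjoint (ball (c i) (ρ i)) (ball (c j) (ρ j)))
    (hproper : ∀ i, closedBall (c i) (ρ i) ⊂ closedBall z0 R)
    (p q : Polynomial ℂ)
    (hq : ∀ w ∈ closedBall z0 R \ ⋃ i, ball (c i) (ρ i), q.eval w ≠ 0) :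
    Summable (fun i => ∮ w in C(c i, ρ i), p.eval w / q.eval w) ∧
      (∮ w in C(z0, R), p.eval w / q.eval w) =
        ∑' i, ∮ w in C(c i, ρ i), p.eval w / q.eval w := by
  classical
  have hX : ∀ w ∈ closedBall z0 R, (∀ i, w ∉ ball (c i) (ρ i)) → q.eval w ≠ 0 :=
    fun w hw hwi => hq w ⟨hw, by simpa using hwi⟩
  obtain ⟨res, hres⟩ := exists_circleIntegral_eval_div_eq_sum p q
  set S := q.roots.toFinset.filter (· ∈ ball z0 R)
  have hball : ∀ i, ball (c i) (ρ i) ⊆ ball z0 R := fun i => interior_closedBall' z0 R ▸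
    interior_maximal (ball_subset_closedBall.trans (hproper i).subset) isOpen_ball
  have houter : ∮ w in C(z0, R), p.eval w / q.eval w = ∑ r ∈ S, res r :=
    hres z0 R hR.le fun z hz => hX z (sphere_subset_closedBall hz) fun i hzi =>
      sphere_disjoint_ball.notMem_of_mem_left hz (hball i hzi)
  have hinner : ∀ i, ∮ w in C(c i, ρ i), p.eval w / q.eval w =
      ∑ r ∈ S with r ∈ ball (c i) (ρ i), res r := by
    intro i
    have hsphere : ∀ z ∈ sphere (c i) (ρ i), ∀ j, z ∉ ball (c j) (ρ j) := fun z hz j => by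
      rcases eq_or_ne j i with rfl | hji
      · exact sphere_disjoint_ball.notMem_of_mem_left hz
      · exact ((hdisj i j hji.symm).sphere_left_of_ball (hρ i).ne' isOpen_ball
          ).notMem_of_mem_left hz
    rw [hres _ _ (hρ i).le fun z hz => hX z ((hproper i).subset (sphere_subset_closedBall hz))
      (hsphere z hz), Finset.filter_filter]
    exact Finset.sum_congr
      (Finset.filter_congr fun r _ => ⟨fun hr => ⟨hball i hr, hr⟩, And.right⟩) fun _ _ => rfl
  have hcover : ∀ r ∈ S, ∃ i, r ∈ ball (c i) (ρ i) := fun r hr => by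
    by_contra! h
    obtain ⟨hroot, hrR⟩ := Finset.mem_filter.1 hr
    exact hX r (ball_subset_closedBall hrR) h (mem_roots'.1 (Multiset.mem_toFinset.1 hroot)).2
  have hsum := hasSum_sum_filter_mem_of_pairwise_disjoint (fun i j => hdisj i j) S hcover res
  simp_rw [← hinner] at hsum
  exact ⟨hsum.summable, houter.trans hsum.tsum_eq.symm⟩

theorem semiclassical_measure_annihilates_rational {ι : Type} [Countable ι]
    (z0 : ℂ) (R : ℝ) (c : ι → ℂ) (ρ : ι → ℝ) (hR : 0 < R) (hρ : ∀ i, 0 < ρ i)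
    (hdisj : ∀ i j, i ≠ j → Disjoint (ball (c i) (ρ i)) (ball (c j) (ρ j)))
    (hsub : ∀ i, ball (c i) (ρ i) ⊆ closedBall z0 R)
    (hproper : ∀ i, closedBall (c i) (ρ i) ⊂ closedBall z0 R)
    (hsum : Summable ρ)
    (p q : Polynomial ℂ)
    (hq : ∀ w ∈ closedBall z0 R \ ⋃ i, ball (c i) (ρ i), q.eval w ≠ 0) :
    Summable (fun i => ∮ w in C(c i, ρ i), p.eval w / q.eval w) ∧
      (∮ w in C(z0, R), p.eval w / q.eval w) =
        ∑' i, ∮ w in C(c i, ρ i), p.eval w / q.eval w :=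
  semiclassical_measure_annihilates_rational_general z0 R c ρ hR hρ hdisj hproper p q hq
end
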